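/- arXiv:2009.07417 — 3 statements merged into one kernel-verified Lean document; each statement's English description precedes it below -/
import Mathlib

section
/- Let S be an m-draw uniform random sample from a finite nonempty set X ⊆ ℝ^d and let c(S) be the sample mean. Then for any δ ∈ (0,1), with probability at least 1 − δ, ∑_{x∈X} ‖x − c(S)‖² ≤ (1 + 1/(mδ)) · ∑_{x∈X} ‖x − c(X)‖². -/
/-!
By the centroid lemma, the cost of `X` at any point `y` is its optimal cost `∑ ‖x - c(X)‖²`
plus `|X| ‖y - c(X)‖²`. The draws are independent with mean `c(X)`, so the cross terms of
`‖∑ (V i - c(X))‖²` have zero expectation and `E ‖c(S) - c(X)‖² = var(X) / m`, where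
`var(X) = ∑ ‖x - c(X)‖² / |X|`. Markov's inequality then bounds by `δ` the probability that
the excess cost `|X| ‖c(S) - c(X)‖²` exceeds `∑ ‖x - c(X)‖² / (m δ)`.
-/

open MeasureTheory ProbabilityTheory Finset

open scoped ENNReal RealInnerProductSpace

theorem Finset.sum_norm_sub_sq_eq_centroid_add {E : Type*} [NormedAddCommGroup E]
    [InnerProductSpace ℝ E] (s : Finset E) (y : E) :
    ∑ x ∈ s, ‖x - y‖ ^ 2 = ∑ x ∈ s, ‖x - (#s : ℝ)⁻¹ • ∑ z ∈ s, z‖ ^ 2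
      + #s * ‖y - (#s : ℝ)⁻¹ • ∑ z ∈ s, z‖ ^ 2 := by
  set c := (#s : ℝ)⁻¹ • ∑ z ∈ s, z
  have hc : ∑ x ∈ s, (x - c) = 0 := by
    rcases s.eq_empty_or_nonempty with rfl | hs
    · simp
    · rw [sum_sub_distrib, sum_const, ← Nat.cast_smul_eq_nsmul ℝ, smul_smul,
        mul_inv_cancel₀ (by simpa using hs.card_ne_zero), one_smul, sub_self]
  have hx (x : E) : ‖x - y‖ ^ 2 = ‖x - c‖ ^ 2 - 2 * ⟪x - c, y - c⟫ + ‖y - c‖ ^ 2 := by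
    rw [← norm_sub_sq_real, sub_sub_sub_cancel_right]
  simp only [hx, sum_add_distrib, sum_sub_distrib, ← mul_sum, ← sum_inner, hc, inner_zero_left,
    sum_const, nsmul_eq_mul]
  ring

section Uniform

variable {Ω α F : Type*} {mΩ : MeasurableSpace Ω} {μ : Measure Ω} [MeasurableSpace α]
  [NormedAddCommGroup F] {s : Finset α} {W : Ω → α}

theorem integrable_comp_of_map_eq_uniform (hs : s.Nonempty) (hW : AEMeasurable W μ)
    (hunif : μ.map W = (#s : ℝ≥0∞)⁻¹ • ∑ x ∈ s, Measure.dirac x) {g : α → F}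
    (hg : StronglyMeasurable g) : Integrable (fun ω ↦ g (W ω)) μ := by
  refine (integrable_map_measure hg.aestronglyMeasurable hW).1 ?_
  rw [hunif]
  refine Integrable.smul_measure ?_ (by simpa using hs.card_ne_zero)
  exact integrable_finsetSum_measure.2 fun x _ ↦ integrable_dirac' hg enorm_lt_top

theorem integral_comp_of_map_eq_uniform [NormedSpace ℝ F] [CompleteSpace F]
    (hW : AEMeasurable W μ)
    (hunif : μ.map W = (#s : ℝ≥0∞)⁻¹ • ∑ x ∈ s, Measure.dirac x) {g : α → F}
    (hg : StronglyMeasurable g) : ∫ ω, g (W ω) ∂μ = (#s : ℝ)⁻¹ • ∑ x ∈ s, g x := by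
  rw [← integral_map hW hg.aestronglyMeasurable, hunif, integral_smul_measure,
    integral_finsetSum_measure fun x _ ↦ integrable_dirac' hg enorm_lt_top]
  simp only [integral_dirac' _ _ hg, ENNReal.toReal_inv, ENNReal.toReal_natCast]

end Uniform

theorem measure_lt_le_ofReal_of_integral_le {Ω : Type*} {mΩ : MeasurableSpace Ω} {μ : Measure Ω}
    [IsFiniteMeasure μ] {f : Ω → ℝ} (hf : 0 ≤ᵐ[μ] f) (hfi : Integrable f μ) {ε δ : ℝ}
    (hε : 0 ≤ ε) (h : ∫ ω, f ω ∂μ ≤ δ * ε) : μ {ω | ε < f ω} ≤ ENNReal.ofReal δ := by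
  rcases hε.eq_or_lt with rfl | hε
  · have hf0 : f =ᵐ[μ] 0 :=
      (integral_eq_zero_iff_of_nonneg_ae hf hfi).1 (le_antisymm (by simpa using h)
        (integral_nonneg_of_ae hf))
    refine le_of_eq_of_le (measure_eq_zero_iff_ae_notMem.2 ?_) zero_le
    filter_upwards [hf0] with ω hω
    simp [hω]
  · have hmarkov := mul_meas_ge_le_integral_of_nonneg hf hfi ε
    have hle : μ.real {ω | ε ≤ f ω} ≤ δ := le_of_mul_le_mul_left (by linarith) hε
    calc μ {ω | ε < f ω} ≤ μ {ω | ε ≤ f ω} := measure_mono fun ω (hω : ε < f ω) ↦ hω.le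
      _ = ENNReal.ofReal (μ.real {ω | ε ≤ f ω}) := (ofReal_measureReal (measure_ne_top _ _)).symm
      _ ≤ ENNReal.ofReal δ := ENNReal.ofReal_le_ofReal hle

section SampleMean

variable {Ω E : Type*} {mΩ : MeasurableSpace Ω} {μ : Measure Ω} [NormedAddCommGroup E]
  [InnerProductSpace ℝ E] [CompleteSpace E] [MeasurableSpace E] [BorelSpace E]

theorem integral_norm_sum_sq_of_pairwise_indepFun [IsFiniteMeasure μ] {ι : Type*} [Fintype ι]
    {Y : ι → Ω → E} (hY : ∀ i, MemLp (Y i) 2 μ) (hmean : ∀ i, μ[Y i] = 0)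
    (hindep : Pairwise fun i j ↦ Y i ⟂ᵢ[μ] Y j) :
    ∫ ω, ‖∑ i, Y i ω‖ ^ 2 ∂μ = ∑ i, ∫ ω, ‖Y i ω‖ ^ 2 ∂μ := by
  have hint (i j : ι) : Integrable (fun ω ↦ ⟪Y i ω, Y j ω⟫) μ :=
    memLp_one_iff_integrable.1 ((innerSL ℝ).memLp_of_bilin 1 (hY i) (hY j))
  have hcross {i j : ι} (hij : i ≠ j) : ∫ ω, ⟪Y i ω, Y j ω⟫ ∂μ = 0 := by
    have := (hindep hij).integral_bilin ((hY i).integrable one_le_two)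
      ((hY j).integrable one_le_two) (innerSL ℝ)
    rwa [hmean, hmean, map_zero] at this
  calc ∫ ω, ‖∑ i, Y i ω‖ ^ 2 ∂μ = ∫ ω, ∑ i, ∑ j, ⟪Y i ω, Y j ω⟫ ∂μ := by
        simp_rw [← real_inner_self_eq_norm_sq, sum_inner, inner_sum]
    _ = ∑ i, ∑ j, ∫ ω, ⟪Y i ω, Y j ω⟫ ∂μ := by
        rw [integral_finsetSum _ fun i _ ↦ integrable_finsetSum _ fun j _ ↦ hint i j]
        exact sum_congr rfl fun i _ ↦ integral_finsetSum _ fun j _ ↦ hint i j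
    _ = ∑ i, ∫ ω, ⟪Y i ω, Y i ω⟫ ∂μ :=
        sum_congr rfl fun i _ ↦ sum_eq_single i (fun j _ hji ↦ hcross hji.symm) (by simp)
    _ = ∑ i, ∫ ω, ‖Y i ω‖ ^ 2 ∂μ := by simp only [real_inner_self_eq_norm_sq]

theorem integral_norm_sampleMean_sub_sq [IsProbabilityMeasure μ] {ι : Type*} [Fintype ι]
    [Nonempty ι] {V : ι → Ω → E} (hV : ∀ i, MemLp (V i) 2 μ) {c : E} (hmean : ∀ i, μ[V i] = c)
    (hindep : Pairwise fun i j ↦ V i ⟂ᵢ[μ] V j) {σ2 : ℝ}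
    (hvar : ∀ i, ∫ ω, ‖V i ω - c‖ ^ 2 ∂μ = σ2) :
    ∫ ω, ‖(Fintype.card ι : ℝ)⁻¹ • ∑ i, V i ω - c‖ ^ 2 ∂μ = σ2 / Fintype.card ι := by
  have hn : (Fintype.card ι : ℝ) ≠ 0 := by positivity
  have hcenter (ω : Ω) :
      (Fintype.card ι : ℝ)⁻¹ • ∑ i, V i ω - c = (Fintype.card ι : ℝ)⁻¹ • ∑ i, (V i ω - c) := by
    rw [sum_sub_distrib, sum_const, card_univ, smul_sub, ← Nat.cast_smul_eq_nsmul ℝ, smul_smul,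
      inv_mul_cancel₀ hn, one_smul]
  have hsum := integral_norm_sum_sq_of_pairwise_indepFun (μ := μ) (Y := fun i ω ↦ V i ω - c)
    (fun i ↦ (hV i).sub (memLp_const c))
    (fun i ↦ by rw [integral_sub ((hV i).integrable one_le_two) (integrable_const c), hmean i]; simp)
    (fun i j hij ↦ (hindep hij).comp (measurable_id.sub_const c) (measurable_id.sub_const c))
  simp only [hcenter, norm_smul, mul_pow, integral_const_mul, hsum, hvar, sum_const, card_univ,
    nsmul_eq_mul, norm_inv, Real.norm_natCast]
  field_simp

theorem measure_lt_norm_sampleMean_sub_sq_le [IsProbabilityMeasure μ] {ι : Type*} [Fintype ι]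
    [Nonempty ι] {V : ι → Ω → E} (hV : ∀ i, MemLp (V i) 2 μ) {c : E} (hmean : ∀ i, μ[V i] = c)
    (hindep : Pairwise fun i j ↦ V i ⟂ᵢ[μ] V j) {σ2 : ℝ}
    (hvar : ∀ i, ∫ ω, ‖V i ω - c‖ ^ 2 ∂μ = σ2) {δ : ℝ} (hδ : 0 < δ) :
    μ {ω | σ2 / (Fintype.card ι * δ) < ‖(Fintype.card ι : ℝ)⁻¹ • ∑ i, V i ω - c‖ ^ 2}
      ≤ ENNReal.ofReal δ := by
  have hL2 : MemLp (fun ω ↦ (Fintype.card ι : ℝ)⁻¹ • ∑ i, V i ω - c) 2 μ :=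
    ((memLp_finsetSum _ fun i _ ↦ hV i).const_smul _).sub (memLp_const c)
  have hσ2 : 0 ≤ σ2 := hvar (Classical.arbitrary ι) ▸ integral_nonneg fun ω ↦ sq_nonneg _
  refine measure_lt_le_ofReal_of_integral_le (.of_forall fun ω ↦ sq_nonneg _)
    ((memLp_two_iff_integrable_sq_norm hL2.1).1 hL2) (by positivity) (le_of_eq ?_)
  rw [integral_norm_sampleMean_sub_sq hV hmean hindep hvar]
  field_simp

end SampleMean

theorem sample_mean_cost_bound_general {d m : ℕ} (hm : 0 < m)
    {Ω : Type*} [MeasureSpace Ω] (μ : Measure Ω) [IsProbabilityMeasure μ]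
    (X : Finset (EuclideanSpace ℝ (Fin d))) (hX : X.Nonempty)
    (V : Fin m → Ω → EuclideanSpace ℝ (Fin d))
    (hmeas : ∀ i, Measurable (V i))
    (hindep : iIndepFun V μ)
    (hunif : ∀ i, Measure.map (V i) μ =
      (X.card : ENNReal)⁻¹ • ∑ x ∈ X, Measure.dirac x)
    (cX : EuclideanSpace ℝ (Fin d)) (hcX : cX = (X.card : ℝ)⁻¹ • ∑ x ∈ X, x)
    (δ : ℝ) (hδ0 : 0 < δ) :
    1 - ENNReal.ofReal δ ≤
      μ {ω | ∑ x ∈ X, ‖x - ((m : ℝ)⁻¹ • ∑ i, V i ω)‖ ^ 2 ≤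
        (1 + (m * δ)⁻¹) * ∑ x ∈ X, ‖x - cX‖ ^ 2} := by
  set Φ := ∑ x ∈ X, ‖x - cX‖ ^ 2
  have : Nonempty (Fin m) := Fin.pos_iff_nonempty.1 hm
  have hV2 (i : Fin m) : MemLp (V i) 2 μ :=
    (memLp_two_iff_integrable_sq_norm (hmeas i).aestronglyMeasurable).2
      (integrable_comp_of_map_eq_uniform hX (hmeas i).aemeasurable (hunif i)
        (continuous_norm.pow 2).stronglyMeasurable)
  have hmean (i : Fin m) : μ[V i] = cX :=
    (integral_comp_of_map_eq_uniform (hmeas i).aemeasurable (hunif i)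
      stronglyMeasurable_id).trans hcX.symm
  have hvar (i : Fin m) : ∫ ω, ‖V i ω - cX‖ ^ 2 ∂μ = (#X : ℝ)⁻¹ * Φ :=
    integral_comp_of_map_eq_uniform (hmeas i).aemeasurable (hunif i)
      ((continuous_id.sub continuous_const).norm.pow 2).stronglyMeasurable
  have hmarkov := measure_lt_norm_sampleMean_sub_sq_le hV2 hmean
    (fun i j hij ↦ hindep.indepFun hij) hvar hδ0
  rw [Fintype.card_fin] at hmarkov
  have hN : (#X : ℝ) ≠ 0 := by simpa using hX.card_ne_zero
  calc 1 - ENNReal.ofReal δ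
      ≤ μ {ω | (#X : ℝ)⁻¹ * Φ / (m * δ) < ‖(m : ℝ)⁻¹ • ∑ i, V i ω - cX‖ ^ 2}ᶜ := by
        refine (tsub_le_tsub_left hmarkov 1).trans (tsub_le_iff_left.2 ?_)
        simpa using measure_univ_le_add_compl _ (μ := μ)
    _ ≤ _ := measure_mono fun ω hω ↦ by
        simp only [Set.mem_compl_iff, Set.mem_ofPred_eq, not_lt] at hω ⊢
        calc _ = Φ + #X * ‖(m : ℝ)⁻¹ • ∑ i, V i ω - cX‖ ^ 2 := by
              subst hcX; exact X.sum_norm_sub_sq_eq_centroid_add _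
          _ ≤ Φ + #X * ((#X : ℝ)⁻¹ * Φ / (m * δ)) := by gcongr
          _ = (1 + (m * δ)⁻¹) * Φ := by field_simp

/-- Lemma 2 of the paper: for an `m`-draw uniform random sample `S` from a
finite nonempty `X ⊆ ℝ^d` with sample mean `c(S)`, for any `δ ∈ (0,1)`, with
probability at least `1 − δ`,
`∑_{x∈X} ‖x − c(S)‖² ≤ (1 + 1/(mδ)) ∑_{x∈X} ‖x − c(X)‖²`. -/
theorem sample_mean_cost_bound {d m : ℕ} (hm : 0 < m)
    {Ω : Type*} [MeasureSpace Ω] (μ : Measure Ω) [IsProbabilityMeasure μ]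
    (X : Finset (EuclideanSpace ℝ (Fin d))) (hX : X.Nonempty)
    (V : Fin m → Ω → EuclideanSpace ℝ (Fin d))
    (hmeas : ∀ i, Measurable (V i))
    (hindep : iIndepFun V μ)
    (hunif : ∀ i, Measure.map (V i) μ =
      (X.card : ENNReal)⁻¹ • ∑ x ∈ X, Measure.dirac x)
    (cX : EuclideanSpace ℝ (Fin d)) (hcX : cX = (X.card : ℝ)⁻¹ • ∑ x ∈ X, x)
    (δ : ℝ) (hδ0 : 0 < δ) (hδ1 : δ < 1) :
    1 - ENNReal.ofReal δ ≤
      μ {ω | ∑ x ∈ X, ‖x - ((m : ℝ)⁻¹ • ∑ i, V i ω)‖ ^ 2 ≤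
        (1 + (m * δ)⁻¹) * ∑ x ∈ X, ‖x - cX‖ ^ 2} :=
  sample_mean_cost_bound_general hm μ X hX V hmeas hindep hunif cX hcX δ hδ0
end

section
/- Optimal balanced assignment equals minimum-cost flow value: with the flow network of the balanced clustering construction, the minimum over all assignments σ: X → C satisfying l ≤ |σ⁻¹(j)| ≤ u of ∑_{x∈X} ‖x − σ(x)‖² equals the minimum cost of a flow of value |X| in the network. -/
open scoped Classical

/-- A feasible assignment for balanced clustering: each point of `X` is sent
to a center in `C`, and every center receives between `l` and `u` points. -/
def IsFeasibleAssignment {d : ℕ} (X C : Finset (EuclideanSpace ℝ (Fin d)))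
    (l u : ℕ) (σ : EuclideanSpace ℝ (Fin d) → EuclideanSpace ℝ (Fin d)) : Prop :=
  (∀ x ∈ X, σ x ∈ C) ∧
    ∀ c ∈ C, l ≤ (X.filter (fun x => σ x = c)).card ∧
      (X.filter (fun x => σ x = c)).card ≤ u

/-- A feasible flow of value `|X|` in the balanced-clustering network, recorded
by its values on the middle edges `x → c`. -/
def IsFeasibleFlow {d : ℕ} (X C : Finset (EuclideanSpace ℝ (Fin d)))
    (l u : ℕ) (f : EuclideanSpace ℝ (Fin d) → EuclideanSpace ℝ (Fin d) → ℝ) : Prop :=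
  (∀ x ∈ X, ∀ c ∈ C, 0 ≤ f x c ∧ f x c ≤ 1) ∧
    (∀ x ∈ X, ∑ c ∈ C, f x c = 1) ∧
    ∀ c ∈ C, (l : ℝ) ≤ ∑ x ∈ X, f x c ∧ ∑ x ∈ X, f x c ≤ (u : ℝ)

/-!
A fractional flow is rounded to an assignment by Birkhoff's theorem. Give every center `u` slots,
the first `l` of them mandatory, and add `|C| u - |X|` dummy points that may only occupy optional
slots. Spreading each flow value `f x c` proportionally over the slots of `c`, and the spare
capacity `u - ∑ₓ f x c` evenly over the dummies and the optional slots of `c`, gives a doubly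
stochastic matrix. A permutation in its Birkhoff decomposition of at most average cost is then an
assignment of cost at most that of the flow, and it meets the lower bounds because no dummy can
sit in a mandatory slot. Conversely, an assignment is a `0/1`-flow of the same cost.
-/

open Finset

theorem exists_perm_pos_cost_le_of_mem_doublyStochastic {n : Type*} [Fintype n]
    {M : Matrix n n ℝ} (hM : M ∈ doublyStochastic ℝ n) (Q : Matrix n n ℝ) :
    ∃ σ : Equiv.Perm n, (∀ i, 0 < M i (σ i)) ∧ ∑ i, Q i (σ i) ≤ ∑ i, ∑ j, M i j * Q i j := by
  obtain ⟨w, hw0, hw1, hwM⟩ := exists_eq_sum_perm_of_mem_doublyStochastic hM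
  have hM_apply : ∀ i j, M i j = ∑ τ : Equiv.Perm n, if τ i = j then w τ else 0 := by
    intro i j
    simp [← hwM, Matrix.sum_apply, Equiv.toPEquiv_apply]
  set cost : Equiv.Perm n → ℝ := fun τ => ∑ i, Q i (τ i)
  have hcost : ∑ i, ∑ j, M i j * Q i j = ∑ τ, w τ * cost τ := by
    simp_rw [cost, hM_apply, sum_mul, mul_sum, ite_mul, zero_mul]
    conv_rhs => rw [sum_comm]
    refine sum_congr rfl fun i _ => ?_
    rw [sum_comm]
    simp
  obtain ⟨σ, hσw, hσmin⟩ := exists_min_image (univ.filter fun τ => 0 < w τ) cost <| by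
    by_contra h
    rw [not_nonempty_iff_eq_empty, filter_eq_empty_iff] at h
    have : ∑ τ, w τ = 0 := sum_eq_zero fun τ _ => le_antisymm (not_lt.mp (h (mem_univ τ))) (hw0 τ)
    simp [this] at hw1
  simp only [mem_filter, mem_univ, true_and] at hσw hσmin
  refine ⟨σ, fun i => ?_, ?_⟩
  · rw [hM_apply]
    refine hσw.trans_le ?_
    simpa using single_le_sum (f := fun τ : Equiv.Perm n => if τ i = σ i then w τ else 0)
      (fun τ _ => by split_ifs <;> simp [hw0]) (mem_univ σ)
  · calc cost σ = ∑ τ, w τ * cost σ := by rw [← sum_mul, hw1, one_mul]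
      _ ≤ ∑ τ, w τ * cost τ := by
        refine sum_le_sum fun τ _ => ?_
        rcases (hw0 τ).eq_or_lt with h | h
        · simp [← h]
        · exact mul_le_mul_of_nonneg_left (hσmin τ h) h.le
      _ = _ := hcost.symm

theorem exists_equiv_pos_cost_le_of_stochastic {ι κ : Type*} [Fintype ι] [Fintype κ]
    {M : ι → κ → ℝ} (hM0 : ∀ i j, 0 ≤ M i j) (hrow : ∀ i, ∑ j, M i j = 1)
    (hcol : ∀ j, ∑ i, M i j = 1) (Q : ι → κ → ℝ) :
    ∃ τ : ι ≃ κ, (∀ i, 0 < M i (τ i)) ∧ ∑ i, Q i (τ i) ≤ ∑ i, ∑ j, M i j * Q i j := by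
  have hcard : Fintype.card ι = Fintype.card κ := by
    have := sum_comm (s := univ) (t := univ) (f := M)
    simp only [hrow, hcol, sum_const, card_univ, nsmul_eq_mul, mul_one] at this
    exact_mod_cast this
  let e : ι ≃ κ := Fintype.equivOfCardEq hcard
  have hN : Matrix.of (fun i i' => M i (e i')) ∈ doublyStochastic ℝ ι := by
    refine mem_doublyStochastic_iff_sum.mpr
      ⟨fun i i' => hM0 i (e i'), fun i => ?_, fun i' => hcol (e i')⟩
    simpa using (e.sum_comp (M i)).trans (hrow i)
  obtain ⟨σ, hσ, hcost⟩ :=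
    exists_perm_pos_cost_le_of_mem_doublyStochastic hN fun i i' => Q i (e i')
  refine ⟨σ.trans e, hσ, hcost.trans_eq (sum_congr rfl fun i _ => ?_)⟩
  exact e.sum_comp (fun j => M i j * Q i j)

theorem sum_fin_ite_val_lt {l u : ℕ} (hlu : l ≤ u) (a b : ℝ) :
    ∑ s : Fin u, (if (s : ℕ) < l then a else b) = l * a + (u - l) * b := by
  rw [Fin.sum_univ_eq_sum_range (fun s => if s < l then a else b), ← sum_range_add_sum_Ico _ hlu,
    sum_congr rfl fun s hs => if_pos (mem_range.mp hs),
    sum_congr rfl fun s hs => if_neg (not_lt.mpr (mem_Ico.mp hs).1)]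
  simp [Nat.cast_sub hlu]

section Slots

variable {ι κ : Type*} [Fintype ι] (f : ι → κ → ℝ) (l u D : ℕ)

-- A zero denominator only occurs where the numerator vanishes or the slot does not exist.
noncomputable def slotMatrix : ι ⊕ Fin D → κ × Fin u → ℝ
  | .inl i, (j, s) =>
      f i j / (∑ i', f i' j) * if (s : ℕ) < l then 1 else ((∑ i', f i' j) - l) / (u - l)
  | .inr _, (j, s) => if (s : ℕ) < l then 0 else (u - ∑ i', f i' j) / (u - l) / D

variable {f l u D}

theorem slotMatrix_nonneg (hf0 : ∀ i j, 0 ≤ f i j) (hcol : ∀ j, l ≤ ∑ i, f i j ∧ ∑ i, f i j ≤ u)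
    (p : ι ⊕ Fin D) (q : κ × Fin u) : 0 ≤ slotMatrix f l u D p q := by
  obtain ⟨j, s⟩ := q
  obtain ⟨hl, hu⟩ := hcol j
  have hlu : (l : ℝ) ≤ u := hl.trans hu
  rcases p with i | _ <;> simp only [slotMatrix]
  · refine mul_nonneg (div_nonneg (hf0 i j) ((Nat.cast_nonneg l).trans hl)) ?_
    split_ifs
    exacts [zero_le_one, div_nonneg (by linarith) (by linarith)]
  · split_ifs
    exacts [le_rfl, div_nonneg (div_nonneg (by linarith) (by linarith)) (by positivity)]

theorem sum_slotMatrix_inl (hf0 : ∀ i j, 0 ≤ f i j) (hcol : ∀ j, l ≤ ∑ i, f i j ∧ ∑ i, f i j ≤ u)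
    (i : ι) (j : κ) : ∑ s, slotMatrix f l u D (.inl i) (j, s) = f i j := by
  obtain ⟨hl, hu⟩ := hcol j
  have hlu : l ≤ u := by exact_mod_cast hl.trans hu
  have hfF : f i j ≤ ∑ i', f i' j := single_le_sum (fun i' _ => hf0 i' j) (mem_univ i)
  simp only [slotMatrix]
  rw [← mul_sum, sum_fin_ite_val_lt hlu, mul_one, mul_div_cancel_of_imp', add_sub_cancel,
    div_mul_cancel_of_imp]
  · intro h; linarith [hf0 i j]
  · intro h; linarith

theorem sum_slotMatrix_inr (hcol : ∀ j, l ≤ ∑ i, f i j ∧ ∑ i, f i j ≤ u) (d : Fin D) (j : κ) :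
    ∑ s, slotMatrix f l u D (.inr d) (j, s) = (u - ∑ i, f i j) / D := by
  obtain ⟨hl, hu⟩ := hcol j
  have hlu : l ≤ u := by exact_mod_cast hl.trans hu
  simp only [slotMatrix]
  rw [sum_fin_ite_val_lt hlu, mul_zero, zero_add, ← mul_div_assoc, mul_div_cancel_of_imp']
  intro h; linarith

variable [Fintype κ]

theorem sum_sub_sum_eq_of_card_add_eq (hrow : ∀ i, ∑ j, f i j = 1)
    (hD : Fintype.card ι + D = Fintype.card κ * u) : ∑ j, ((u : ℝ) - ∑ i, f i j) = D := by
  rw [sum_sub_distrib, sum_comm, sum_congr rfl fun i _ => hrow i]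
  simp only [sum_const, card_univ, nsmul_eq_mul, mul_one]
  rw [sub_eq_iff_eq_add']
  exact_mod_cast hD.symm

theorem slotMatrix_row_sum (hf0 : ∀ i j, 0 ≤ f i j) (hrow : ∀ i, ∑ j, f i j = 1)
    (hcol : ∀ j, l ≤ ∑ i, f i j ∧ ∑ i, f i j ≤ u) (hD : Fintype.card ι + D = Fintype.card κ * u)
    (p : ι ⊕ Fin D) : ∑ q, slotMatrix f l u D p q = 1 := by
  rw [Fintype.sum_prod_type]
  rcases p with i | d
  · simp only [sum_slotMatrix_inl hf0 hcol, hrow]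
  · simp only [sum_slotMatrix_inr hcol, ← sum_div, sum_sub_sum_eq_of_card_add_eq hrow hD]
    exact div_self (Nat.cast_ne_zero.mpr (Fin.pos d).ne')

theorem slotMatrix_col_sum (hrow : ∀ i, ∑ j, f i j = 1)
    (hcol : ∀ j, l ≤ ∑ i, f i j ∧ ∑ i, f i j ≤ u) (hD : Fintype.card ι + D = Fintype.card κ * u)
    (q : κ × Fin u) : ∑ p, slotMatrix f l u D p q = 1 := by
  obtain ⟨j, s⟩ := q
  obtain ⟨hl, hu⟩ := hcol j
  rw [Fintype.sum_sum_type]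
  simp only [slotMatrix]
  split_ifs with hs
  · have hF : 0 < ∑ i, f i j := lt_of_lt_of_le (by exact_mod_cast (Nat.zero_le _).trans_lt hs) hl
    rw [← sum_mul, ← sum_div, div_self hF.ne']
    simp
  · have hsl : (l : ℝ) < u := by exact_mod_cast (not_lt.mp hs).trans_lt s.2
    have hD0 : (D : ℝ) = 0 → (u : ℝ) - ∑ i, f i j = 0 := fun h0 =>
      (sum_eq_zero_iff_of_nonneg fun j' _ => sub_nonneg.mpr (hcol j').2).mp
        ((sum_sub_sum_eq_of_card_add_eq hrow hD).trans h0) j (mem_univ j)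
    have hFl : (∑ i, f i j) / (∑ i, f i j) * ((∑ i, f i j) - l) = (∑ i, f i j) - l := by
      rcases eq_or_ne (∑ i, f i j) 0 with h | h
      · simp only [h, div_zero, zero_mul, zero_sub, zero_eq_neg]
        exact_mod_cast le_antisymm (h ▸ hl) (Nat.cast_nonneg l)
      · rw [div_self h, one_mul]
    rw [← sum_mul, ← sum_div, sum_const, card_univ, Fintype.card_fin, nsmul_eq_mul,
      mul_div_cancel_of_imp' fun h0 => by rw [hD0 h0, zero_div], ← mul_div_assoc, hFl,
      ← add_div, div_eq_one_iff_eq (sub_ne_zero.mpr hsl.ne')]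
    ring

end Slots

theorem card_fiber_mem_Icc_of_equiv {ι δ κ : Type*} [Fintype ι] {l u : ℕ} (hlu : l ≤ u)
    (τ : ι ⊕ δ ≃ κ × Fin u) (hτ : ∀ d, l ≤ ((τ (.inr d)).2 : ℕ)) (j : κ) :
    l ≤ #{i | (τ (.inl i)).1 = j} ∧ #{i | (τ (.inl i)).1 = j} ≤ u := by
  constructor
  · calc l = #{s : Fin u | (s : ℕ) < l} := by rw [Fin.card_filter_val_lt, min_eq_right hlu]
      _ ≤ _ := card_le_card_of_surjOn (fun i => (τ (.inl i)).2) fun s hs => by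
        simp only [coe_filter, mem_univ, true_and, Set.mem_ofPred_eq] at hs
        rcases h : τ.symm (j, s) with i | d
        · have hi : τ (.inl i) = (j, s) := by rw [← h, Equiv.apply_symm_apply]
          exact ⟨i, by simp [hi], by simp [hi]⟩
        · have hd : τ (.inr d) = (j, s) := by rw [← h, Equiv.apply_symm_apply]
          exact absurd (hτ d) (by simpa [hd] using hs)
  · calc _ ≤ #(univ : Finset (Fin u)) := card_le_card_of_injOn (fun i => (τ (.inl i)).2)
          (fun _ _ => mem_univ _) fun a ha b hb hab => by
            simp only [coe_filter, mem_univ, true_and, Set.mem_ofPred_eq] at ha hb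
            exact Sum.inl_injective (τ.injective (Prod.ext (ha.trans hb.symm) hab))
      _ = u := by simp

theorem exists_assignment_cost_le_of_fractional {ι κ : Type*} [Fintype ι] [Fintype κ] {l u : ℕ}
    {f : ι → κ → ℝ} (hf0 : ∀ i j, 0 ≤ f i j) (hrow : ∀ i, ∑ j, f i j = 1)
    (hcol : ∀ j, l ≤ ∑ i, f i j ∧ ∑ i, f i j ≤ u) (q : ι → κ → ℝ) :
    ∃ σ : ι → κ, (∀ j, l ≤ #{i | σ i = j} ∧ #{i | σ i = j} ≤ u) ∧
      ∑ i, q i (σ i) ≤ ∑ i, ∑ j, f i j * q i j := by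
  have hcard : Fintype.card ι ≤ Fintype.card κ * u := by
    have : (Fintype.card ι : ℝ) ≤ Fintype.card κ * u := calc
      (Fintype.card ι : ℝ) = ∑ j, ∑ i, f i j := by simp [sum_comm (γ := κ), hrow]
      _ ≤ ∑ _j : κ, (u : ℝ) := sum_le_sum fun j _ => (hcol j).2
      _ = Fintype.card κ * u := by simp
    exact_mod_cast this
  obtain ⟨D, hD⟩ : ∃ D, Fintype.card ι + D = Fintype.card κ * u := ⟨_, Nat.add_sub_cancel' hcard⟩
  set Q : ι ⊕ Fin D → κ × Fin u → ℝ := fun p c => Sum.elim (fun i => q i c.1) 0 p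
  obtain ⟨τ, hτ, hcost⟩ := exists_equiv_pos_cost_le_of_stochastic (slotMatrix_nonneg hf0 hcol)
    (slotMatrix_row_sum hf0 hrow hcol hD) (slotMatrix_col_sum hrow hcol hD) Q
  have hdummy : ∀ d, l ≤ ((τ (.inr d)).2 : ℕ) := fun d => by
    by_contra h
    have := hτ (.inr d)
    simp [slotMatrix, not_le.mp h] at this
  refine ⟨fun i => (τ (.inl i)).1, fun j => ?_, ?_⟩
  · obtain ⟨hl, hu⟩ := hcol j
    exact card_fiber_mem_Icc_of_equiv (by exact_mod_cast hl.trans hu) τ hdummy j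
  · calc ∑ i, q i (τ (.inl i)).1 = ∑ p, Q p (τ p) := by simp [Q, Fintype.sum_sum_type]
      _ ≤ ∑ p, ∑ c, slotMatrix f l u D p c * Q p c := hcost
      _ = ∑ i, ∑ j, f i j * q i j := by
        simp only [Q, Fintype.sum_sum_type, Fintype.sum_prod_type, Sum.elim_inl, Sum.elim_inr,
          Pi.zero_apply, mul_zero, sum_const_zero, add_zero, ← sum_mul, sum_slotMatrix_inl hf0 hcol]

section Clustering

variable {d : ℕ} {X C : Finset (EuclideanSpace ℝ (Fin d))} {l u : ℕ}

theorem IsFeasibleAssignment.exists_flow_cost_eq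
    {σ : EuclideanSpace ℝ (Fin d) → EuclideanSpace ℝ (Fin d)} (hσ : IsFeasibleAssignment X C l u σ)
    (q : EuclideanSpace ℝ (Fin d) → EuclideanSpace ℝ (Fin d) → ℝ) :
    ∃ f, IsFeasibleFlow X C l u f ∧
      ∑ x ∈ X, ∑ c ∈ C, f x c * q x c = ∑ x ∈ X, q x (σ x) := by
  obtain ⟨hmem, hcard⟩ := hσ
  refine ⟨fun x c => if σ x = c then 1 else 0,
    ⟨fun x _ c _ => ?_, fun x hx => ?_, fun c hc => ?_⟩, ?_⟩
  · dsimp only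
    split_ifs <;> norm_num
  · simp [hmem x hx]
  · simpa [sum_boole] using hcard c hc
  · exact sum_congr rfl fun x hx => by simp [hmem x hx]

theorem IsFeasibleFlow.exists_assignment_cost_le
    {f : EuclideanSpace ℝ (Fin d) → EuclideanSpace ℝ (Fin d) → ℝ} (hf : IsFeasibleFlow X C l u f)
    (q : EuclideanSpace ℝ (Fin d) → EuclideanSpace ℝ (Fin d) → ℝ) :
    ∃ σ, IsFeasibleAssignment X C l u σ ∧
      ∑ x ∈ X, q x (σ x) ≤ ∑ x ∈ X, ∑ c ∈ C, f x c * q x c := by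
  obtain ⟨hf01, hrow, hcol⟩ := hf
  obtain ⟨σ, hσ, hcost⟩ := exists_assignment_cost_le_of_fractional (ι := X) (κ := C)
    (f := fun x c => f x c) (fun x c => (hf01 x x.2 c c.2).1)
    (fun x => (sum_coe_sort C (f x)).trans (hrow x x.2))
    (fun c => sum_coe_sort X (f · c) ▸ hcol c c.2) (fun x c => q x c)
  let τ : EuclideanSpace ℝ (Fin d) → EuclideanSpace ℝ (Fin d) := fun y =>
    if hy : y ∈ X then σ ⟨y, hy⟩ else y
  have hτ : ∀ x : X, τ x = σ x := fun x => dif_pos x.2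
  have hfiber : ∀ c (hc : c ∈ C),
      X.filter (fun x => τ x = c) = (univ.filter fun x => σ x = ⟨c, hc⟩).map (.subtype _) := by
    intro c hc
    ext y
    by_cases hy : y ∈ X <;> simp [τ, hy, Subtype.ext_iff]
  refine ⟨τ, ⟨fun x hx => hτ ⟨x, hx⟩ ▸ (σ _).2, fun c hc => ?_⟩, ?_⟩
  · rw [hfiber c hc, card_map]
    convert hσ ⟨c, hc⟩
  · rw [← sum_coe_sort X]
    simpa [hτ, ← sum_coe_sort C, sum_attach X (fun x => ∑ c ∈ C.attach, f x c * q x c)] using hcost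

end Clustering

theorem min_balanced_assignment_eq_min_cost_flow_general {d : ℕ}
    (X C : Finset (EuclideanSpace ℝ (Fin d))) (l u : ℕ) :
    sInf {r : ℝ | ∃ σ, IsFeasibleAssignment X C l u σ ∧
        r = ∑ x ∈ X, ‖x - σ x‖ ^ 2} =
      sInf {r : ℝ | ∃ f, IsFeasibleFlow X C l u f ∧
        r = ∑ x ∈ X, ∑ c ∈ C, f x c * ‖x - c‖ ^ 2} := by
  refine csInf_eq_csInf_of_forall_exists_le ?_ ?_
  · rintro _ ⟨σ, hσ, rfl⟩
    obtain ⟨f, hf, hcost⟩ := hσ.exists_flow_cost_eq fun x c => ‖x - c‖ ^ 2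
    exact ⟨_, ⟨f, hf, rfl⟩, hcost.le⟩
  · rintro _ ⟨f, hf, rfl⟩
    obtain ⟨σ, hσ, hcost⟩ := hf.exists_assignment_cost_le fun x c => ‖x - c‖ ^ 2
    exact ⟨_, ⟨σ, hσ, rfl⟩, hcost⟩

/-- The optimal balanced assignment cost equals the minimum cost of a flow of
value `|X|` in the balanced-clustering network. -/
theorem min_balanced_assignment_eq_min_cost_flow {d k : ℕ}
    (X C : Finset (EuclideanSpace ℝ (Fin d))) (hC : C.card = k)
    (l u : ℕ) (hl : 0 < l) (hlu : l ≤ u)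
    (hlow : k * l ≤ X.card) (hup : X.card ≤ k * u) :
    sInf {r : ℝ | ∃ σ, IsFeasibleAssignment X C l u σ ∧
        r = ∑ x ∈ X, ‖x - σ x‖ ^ 2} =
      sInf {r : ℝ | ∃ f, IsFeasibleFlow X C l u f ∧
        r = ∑ x ∈ X, ∑ c ∈ C, f x c * ‖x - c‖ ^ 2} :=
  min_balanced_assignment_eq_min_cost_flow_general X C l u
end

section
/- Main approximation guarantee: let X be a (ln m / m)-balanced instance of variance-based k-clustering with optimum OPT = ∑_i ∑_{x∈X_i*} ‖x − c(X_i*)‖². Suppose an m-draw uniform sample S satisfies: (a) for each i, |S_i| ≥ (1−η)·m·p(i) where p(i) = |X_i*|/n and p(i) ≥ ln m / m, and (b) for each i, ‖c(S_i) − c(X_i*)‖² ≤ (1/(δ|S_i|))·(1/|X_i*|)∑_{x∈X_i*}‖x − c(X_i*)‖². Then the Voronoi partition {X_i'} of X with respect to centers {c(S_i)} satisfies ∑_i ∑_{x∈X_i'} ‖x − c(X_i')‖² ≤ (1 + 1/((1−η)·δ·ln m))·OPT. -/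
/-!
Recentering a cluster at any point `c` adds `|T| · ‖c(T) - c‖²` to its cost, so the centroid is the
best center. Hence the Voronoi partition for the sample means costs at most what the optimal
clusters cost when each is served by its own sample mean instead of its centroid. By (b) the
surcharge for cluster `i` is at most `(δ |S_i|)⁻¹` times its optimal cost, and (a) together with
balance gives `|S_i| ≥ (1 - η) ln m`.
-/

noncomputable def clusterMean {E : Type*} [AddCommMonoid E] [Module ℝ E] (T : Finset E) : E :=
  (T.card : ℝ)⁻¹ • ∑ y ∈ T, y

lemma sum_sub_clusterMean {E : Type*} [AddCommGroup E] [Module ℝ E] (T : Finset E) :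
    ∑ x ∈ T, (x - clusterMean T) = 0 := by
  rcases T.eq_empty_or_nonempty with rfl | hT
  · simp
  have hcard : (T.card : ℝ) ≠ 0 := by exact_mod_cast hT.card_pos.ne'
  rw [Finset.sum_sub_distrib, Finset.sum_const, clusterMean, ← Nat.cast_smul_eq_nsmul ℝ,
    smul_smul, mul_inv_cancel₀ hcard, one_smul, sub_self]

lemma Finset.sum_eq_sum_sum_of_existsUnique {α ι M : Type*} [Fintype ι] [AddCommMonoid M]
    {X : Finset α} {s : ι → Finset α} (hsub : ∀ i, s i ⊆ X)
    (hpart : ∀ x ∈ X, ∃! i, x ∈ s i) (f : α → M) :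
    ∑ x ∈ X, f x = ∑ i, ∑ x ∈ s i, f x := by
  classical
  have hrestrict : ∀ i, ∑ x ∈ s i, f x = ∑ x ∈ X, if x ∈ s i then f x else 0 := by
    intro i
    rw [← Finset.sum_filter, Finset.filter_mem_eq_inter, Finset.inter_eq_right.mpr (hsub i)]
  simp_rw [hrestrict]
  rw [Finset.sum_comm]
  refine Finset.sum_congr rfl fun x hx => ?_
  obtain ⟨i, hi, huniq⟩ := hpart x hx
  rw [Finset.sum_eq_single i (fun j _ hj => if_neg fun hj' => hj (huniq j hj'))
    (fun h => absurd (Finset.mem_univ i) h), if_pos hi]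

section Clustering

variable {E : Type*} [NormedAddCommGroup E]

def clusterCost (T : Finset E) (c : E) : ℝ := ∑ x ∈ T, ‖x - c‖ ^ 2

lemma clusterCost_nonneg (T : Finset E) (c : E) : 0 ≤ clusterCost T c :=
  Finset.sum_nonneg fun _ _ => sq_nonneg _

variable [InnerProductSpace ℝ E]

lemma clusterCost_eq_add (T : Finset E) (c : E) :
    clusterCost T c = clusterCost T (clusterMean T) + T.card * ‖clusterMean T - c‖ ^ 2 := by
  set μ := clusterMean T
  have hsplit : ∀ x ∈ T,
      ‖x - c‖ ^ 2 = ‖x - μ‖ ^ 2 + 2 * inner ℝ (x - μ) (μ - c) + ‖μ - c‖ ^ 2 :=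
    fun x _ => by rw [← sub_add_sub_cancel x μ c, norm_add_sq_real]
  have hcross : ∑ x ∈ T, 2 * inner ℝ (x - μ) (μ - c) = 0 := by
    rw [← Finset.mul_sum, ← sum_inner, sum_sub_clusterMean, inner_zero_left, mul_zero]
  rw [clusterCost, clusterCost, Finset.sum_congr rfl hsplit, Finset.sum_add_distrib,
    Finset.sum_add_distrib, hcross, add_zero, Finset.sum_const, nsmul_eq_mul]

lemma clusterCost_clusterMean_le (T : Finset E) (c : E) :
    clusterCost T (clusterMean T) ≤ clusterCost T c := by
  rw [clusterCost_eq_add T c]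
  exact le_add_of_nonneg_right (by positivity)

lemma clusterCost_le_one_add_mul {T : Finset E} {c : E} {ε : ℝ} (hε : 0 ≤ ε)
    (hc : ‖c - clusterMean T‖ ^ 2 ≤
      ε * ((T.card : ℝ)⁻¹ * clusterCost T (clusterMean T))) :
    clusterCost T c ≤ (1 + ε) * clusterCost T (clusterMean T) := by
  set V := clusterCost T (clusterMean T)
  have hV : 0 ≤ V := clusterCost_nonneg _ _
  have hsurcharge : (T.card : ℝ) * ‖clusterMean T - c‖ ^ 2 ≤ ε * V :=
    calc (T.card : ℝ) * ‖clusterMean T - c‖ ^ 2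
        ≤ T.card * (ε * ((T.card : ℝ)⁻¹ * V)) := by
          rw [norm_sub_rev]; exact mul_le_mul_of_nonneg_left hc (Nat.cast_nonneg _)
      _ = (T.card * (T.card : ℝ)⁻¹) * (ε * V) := by ring
      _ ≤ ε * V := mul_le_of_le_one_left (by positivity) mul_inv_le_one
  rw [clusterCost_eq_add T c]
  linarith

lemma sum_clusterCost_voronoi_le {ι : Type*} [Fintype ι] [DecidableEq ι] {X : Finset E} {s : ι → Finset E} (hsub : ∀ i, s i ⊆ X)
    (hpart : ∀ x ∈ X, ∃! i, x ∈ s i) (c : ι → E) (a : E → ι)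
    (hvor : ∀ x ∈ X, ∀ j, ‖x - c (a x)‖ ≤ ‖x - c j‖) :
    ∑ i, clusterCost (X.filter (a · = i)) (clusterMean (X.filter (a · = i))) ≤
      ∑ i, clusterCost (s i) (c i) :=
  calc ∑ i, clusterCost (X.filter (a · = i)) (clusterMean (X.filter (a · = i)))
      ≤ ∑ i, clusterCost (X.filter (a · = i)) (c i) :=
        Finset.sum_le_sum fun i _ => clusterCost_clusterMean_le _ _
    _ = ∑ x ∈ X, ‖x - c (a x)‖ ^ 2 := by
        rw [← Finset.sum_fiberwise X a]
        refine Finset.sum_congr rfl fun i _ => Finset.sum_congr rfl fun x hx => ?_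
        rw [(Finset.mem_filter.mp hx).2]
    _ = ∑ i, ∑ x ∈ s i, ‖x - c (a x)‖ ^ 2 :=
        Finset.sum_eq_sum_sum_of_existsUnique hsub hpart _
    _ ≤ ∑ i, clusterCost (s i) (c i) :=
        Finset.sum_le_sum fun i _ => Finset.sum_le_sum fun x hx =>
          pow_le_pow_left₀ (norm_nonneg _) (hvor x (hsub i hx) i) 2

end Clustering

lemma one_sub_mul_log_le_of_balanced {m p s η : ℝ} (hm : 0 < m) (hη : η < 1)
    (hbal : Real.log m / m ≤ p) (ha : (1 - η) * m * p ≤ s) : (1 - η) * Real.log m ≤ s :=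
  calc (1 - η) * Real.log m = (1 - η) * m * (Real.log m / m) := by field_simp
    _ ≤ (1 - η) * m * p := mul_le_mul_of_nonneg_left hbal (mul_nonneg (by linarith) hm.le)
    _ ≤ s := ha

open scoped Classical

theorem random_sampling_main_general {d k m n : ℕ} (hm : 2 ≤ m)
    (X : Finset (EuclideanSpace ℝ (Fin d)))
    -- the optimal clustering {Xs i}, a partition of X
    (Xs : Fin k → Finset (EuclideanSpace ℝ (Fin d)))
    (hsub : ∀ i, Xs i ⊆ X) (hpart : ∀ x ∈ X, ∃! i : Fin k, x ∈ Xs i)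
    -- the instance is (ln m / m)-balanced
    (hbal : ∀ i, Real.log m / m ≤ ((Xs i).card : ℝ) / n)
    -- the sampled points falling in each optimal cluster, and their means
    (S : Fin k → Multiset (EuclideanSpace ℝ (Fin d)))
    (δ η : ℝ) (hδ0 : 0 < δ) (hη1 : η < 1)
    (cS : Fin k → EuclideanSpace ℝ (Fin d))
    (cXs : Fin k → EuclideanSpace ℝ (Fin d))
    (hcXs : ∀ i, cXs i = (((Xs i).card : ℝ))⁻¹ • ∑ y ∈ Xs i, y)
    -- event (a): sample cluster sizes
    (ha : ∀ i, (1 - η) * m * (((Xs i).card : ℝ) / n) ≤ ((S i).card : ℝ))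
    -- event (b): sample-mean error bounds
    (hb : ∀ i, ‖cS i - cXs i‖ ^ 2 ≤
      (δ * ((S i).card : ℝ))⁻¹ *
        (((Xs i).card : ℝ)⁻¹ * ∑ x ∈ Xs i, ‖x - cXs i‖ ^ 2))
    -- the Voronoi partition {X' i} of X w.r.t. the centers cS i
    (a : EuclideanSpace ℝ (Fin d) → Fin k)
    (hvor : ∀ x ∈ X, ∀ j : Fin k, ‖x - cS (a x)‖ ≤ ‖x - cS j‖) :
    ∑ i : Fin k, ∑ x ∈ X.filter (fun y => a y = i),
        ‖x - (((X.filter (fun y => a y = i)).card : ℝ)⁻¹ •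
          ∑ y ∈ X.filter (fun z => a z = i), y)‖ ^ 2 ≤
      (1 + ((1 - η) * δ * Real.log m)⁻¹) *
        ∑ i : Fin k, ∑ x ∈ Xs i, ‖x - cXs i‖ ^ 2 := by
  obtain rfl : cXs = fun i => clusterMean (Xs i) := funext hcXs
  have hlog : 0 < Real.log m := Real.log_pos (by exact_mod_cast hm)
  have hη : 0 < 1 - η := by linarith
  set C := ((1 - η) * δ * Real.log m)⁻¹
  have hsurcharge : ∀ i, (δ * ((S i).card : ℝ))⁻¹ ≤ C := fun i => by
    have hsize := one_sub_mul_log_le_of_balanced (by positivity) hη1 (hbal i) (ha i)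
    apply inv_anti₀ (by positivity)
    nlinarith
  have hcluster : ∀ i,
      clusterCost (Xs i) (cS i) ≤ (1 + C) * clusterCost (Xs i) (clusterMean (Xs i)) :=
    fun i => clusterCost_le_one_add_mul (by positivity) <| (hb i).trans <|
      mul_le_mul_of_nonneg_right (hsurcharge i) (by positivity)
  calc _ ≤ ∑ i, clusterCost (Xs i) (cS i) := sum_clusterCost_voronoi_le hsub hpart cS a hvor
    _ ≤ ∑ i, (1 + C) * clusterCost (Xs i) (clusterMean (Xs i)) :=
        Finset.sum_le_sum fun i _ => hcluster i
    _ = _ := (Finset.mul_sum _ _ _).symm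

/-- Main approximation guarantee (deterministic core of the paper's main
theorem): for a `(ln m / m)`-balanced instance with optimal clustering
`{Xs i}`, if the sample clusters `S i` satisfy the size bound (a) and the
sample-mean error bound (b), then the Voronoi partition of `X` with respect to
the sample means `cS i` has cost at most
`(1 + 1/((1−η)·δ·ln m))` times the optimum. -/
theorem random_sampling_main {d k m n : ℕ} (hm : 2 ≤ m)
    (X : Finset (EuclideanSpace ℝ (Fin d))) (hX : X.Nonempty) (hn : X.card = n)
    -- the optimal clustering {Xs i}, a partition of X
    (Xs : Fin k → Finset (EuclideanSpace ℝ (Fin d)))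
    (hsub : ∀ i, Xs i ⊆ X) (hpart : ∀ x ∈ X, ∃! i : Fin k, x ∈ Xs i)
    (hopt : ∀ Ys : Fin k → Finset (EuclideanSpace ℝ (Fin d)),
      (∀ i, Ys i ⊆ X) → (∀ x ∈ X, ∃! i : Fin k, x ∈ Ys i) →
      ∑ i : Fin k, ∑ x ∈ Xs i,
          ‖x - (((Xs i).card : ℝ)⁻¹ • ∑ y ∈ Xs i, y)‖ ^ 2 ≤
        ∑ i : Fin k, ∑ x ∈ Ys i,
          ‖x - (((Ys i).card : ℝ)⁻¹ • ∑ y ∈ Ys i, y)‖ ^ 2)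
    -- the instance is (ln m / m)-balanced
    (hbal : ∀ i, Real.log m / m ≤ ((Xs i).card : ℝ) / n)
    -- the sampled points falling in each optimal cluster, and their means
    (S : Fin k → Multiset (EuclideanSpace ℝ (Fin d)))
    (hS : ∀ i, ∀ x ∈ S i, x ∈ Xs i)
    (δ η : ℝ) (hδ0 : 0 < δ) (hδ1 : δ < 1) (hη0 : 0 < η) (hη1 : η < 1)
    (cS : Fin k → EuclideanSpace ℝ (Fin d))
    (hcS : ∀ i, cS i = (((S i).card : ℝ))⁻¹ • (S i).sum)
    (cXs : Fin k → EuclideanSpace ℝ (Fin d))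
    (hcXs : ∀ i, cXs i = (((Xs i).card : ℝ))⁻¹ • ∑ y ∈ Xs i, y)
    -- event (a): sample cluster sizes
    (ha : ∀ i, (1 - η) * m * (((Xs i).card : ℝ) / n) ≤ ((S i).card : ℝ))
    -- event (b): sample-mean error bounds
    (hb : ∀ i, ‖cS i - cXs i‖ ^ 2 ≤
      (δ * ((S i).card : ℝ))⁻¹ *
        (((Xs i).card : ℝ)⁻¹ * ∑ x ∈ Xs i, ‖x - cXs i‖ ^ 2))
    -- the Voronoi partition {X' i} of X w.r.t. the centers cS i
    (a : EuclideanSpace ℝ (Fin d) → Fin k)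
    (hvor : ∀ x ∈ X, ∀ j : Fin k, ‖x - cS (a x)‖ ≤ ‖x - cS j‖) :
    ∑ i : Fin k, ∑ x ∈ X.filter (fun y => a y = i),
        ‖x - (((X.filter (fun y => a y = i)).card : ℝ)⁻¹ •
          ∑ y ∈ X.filter (fun z => a z = i), y)‖ ^ 2 ≤
      (1 + ((1 - η) * δ * Real.log m)⁻¹) *
        ∑ i : Fin k, ∑ x ∈ Xs i, ‖x - cXs i‖ ^ 2 :=
  random_sampling_main_general hm X Xs hsub hpart hbal S δ η hδ0 hη1 cS cXs hcXs ha hb a hvor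
end
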